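/- arXiv:0809.4582 — 2 statements merged into one kernel-verified Lean document; each statement's English description precedes it below -/
import Mathlib

section
/- Reduction of modular equivalence to visible equivalence: for compatible modules P and Q (same input signature I and same output signature), P ≡ₘ Q if and only if P ⊔ G_I ≡ᵥ Q ⊔ G_I, where G_I = ⟨{{I} ←}, ∅, I, ∅⟩ is the module consisting of a single choice rule generating all subsets of I. -/
attribute [local instance] Classical.propDecidable

/-- Rules of smodels programs: choice rules `{A} ← B, not C` and weight rules
`a ← w ≤ {B = wB, not C = wC}`. -/
inductive SRule : Type
  | choice (A B C : Finset ℕ) : SRule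
  | weight (a : ℕ) (w : ℕ) (B C : Finset ℕ) (wB wC : ℕ → ℕ) : SRule

def SRule.heads : SRule → Finset ℕ
  | .choice A _ _ => A
  | .weight a _ _ _ _ _ => {a}

def SRule.pos : SRule → Finset ℕ
  | .choice _ B _ => B
  | .weight _ _ B _ _ _ => B

def SRule.neg : SRule → Finset ℕ
  | .choice _ _ C => C
  | .weight _ _ _ C _ _ => C

def SRule.atoms (r : SRule) : Set ℕ := ↑r.heads ∪ ↑r.pos ∪ ↑r.neg

/-- A positive weight rule `head ← w ≤ {B = wB}`. -/
structure PosW where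
  head : ℕ
  w : ℕ
  B : Finset ℕ
  wB : ℕ → ℕ

/-- Weight realized by an interpretation `X` on a positive weight body. -/
noncomputable def wsum (B : Finset ℕ) (wB : ℕ → ℕ) (X : Set ℕ) : ℕ :=
  ∑ b ∈ B.filter (· ∈ X), wB b

/-- Least model of a positive (weight) program. -/
def lmW (Q : Set PosW) : Set ℕ :=
  ⋂₀ {X | ∀ p ∈ Q, p.w ≤ wsum p.B p.wB X → p.head ∈ X}

/-- The input-aware reduct `R^{M,I}` of a set of smodels rules. -/
noncomputable def sreduct (R : Set SRule) (I M : Set ℕ) : Set PosW :=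
  {p | (∃ A B C, SRule.choice A B C ∈ R ∧ ∃ a ∈ A, a ∈ M ∧
          (B : Set ℕ) ∩ I ⊆ M ∧ (C : Set ℕ) ∩ M = ∅ ∧
          p = ⟨a, (B.filter (· ∉ I)).card, B.filter (· ∉ I), fun _ => 1⟩)
     ∨ (∃ a w B C wB wC, SRule.weight a w B C wB wC ∈ R ∧
          p = ⟨a, w - (∑ b ∈ B.filter (fun b => b ∈ I ∧ b ∈ M), wB b)
                 - (∑ c ∈ C.filter (· ∉ M), wC c),
               B.filter (· ∉ I), wB⟩)}

/-- An smodels program module `⟨R, I, O, H⟩`. -/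
structure SMod where
  R : Set SRule
  I : Set ℕ
  O : Set ℕ
  H : Set ℕ

def SMod.hb (P : SMod) : Set ℕ := P.I ∪ P.O ∪ P.H

def SMod.vis (P : SMod) : Set ℕ := P.I ∪ P.O

def SMod.wf (P : SMod) : Prop :=
  P.I ∩ P.O = ∅ ∧ P.I ∩ P.H = ∅ ∧ P.O ∩ P.H = ∅ ∧
  (∀ r ∈ P.R, r.atoms ⊆ P.hb) ∧ (∀ r ∈ P.R, (r.heads : Set ℕ) ∩ P.I = ∅)

/-- Stable models of an smodels program module. -/
def SMod.SM (P : SMod) : Set (Set ℕ) :=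
  {M | M ⊆ P.hb ∧ M \ P.I = lmW (sreduct P.R P.I M)}

def sdepEdge (R : Set SRule) (b a : ℕ) : Prop := ∃ r ∈ R, a ∈ r.heads ∧ b ∈ r.pos

def sdep (R : Set SRule) : ℕ → ℕ → Prop := Relation.ReflTransGen (sdepEdge R)

/-- The composition `P₁ ⊕ P₂` (also underlying the join `⊔`). -/
def SMod.comp (P₁ P₂ : SMod) : SMod :=
  ⟨P₁.R ∪ P₂.R, (P₁.I \ P₂.O) ∪ (P₂.I \ P₁.O), P₁.O ∪ P₂.O, P₁.H ∪ P₂.H⟩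

def compDefined (P₁ P₂ : SMod) : Prop :=
  P₁.O ∩ P₂.O = ∅ ∧ P₁.H ∩ P₂.hb = ∅ ∧ P₂.H ∩ P₁.hb = ∅

def mutuallyDep (P₁ P₂ : SMod) : Prop :=
  ∃ a ∈ P₁.O, ∃ b ∈ P₂.O,
    sdep (P₁.R ∪ P₂.R) a b ∧ sdep (P₁.R ∪ P₂.R) b a

def joinDefined (P₁ P₂ : SMod) : Prop := compDefined P₁ P₂ ∧ ¬ mutuallyDep P₁ P₂

def compatible (P₁ P₂ : SMod) (M₁ M₂ : Set ℕ) : Prop :=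
  M₁ ∩ P₂.vis = M₂ ∩ P₁.vis

def natJoin (P₁ P₂ : SMod) (A₁ A₂ : Set (Set ℕ)) : Set (Set ℕ) :=
  {M | ∃ M₁ ∈ A₁, ∃ M₂ ∈ A₂, compatible P₁ P₂ M₁ M₂ ∧ M = M₁ ∪ M₂}

/-- Visible equivalence of modules. -/
def SMod.visEq (P Q : SMod) : Prop :=
  P.vis = Q.vis ∧ ∃ f : P.SM → Q.SM, Function.Bijective f ∧
    ∀ M : P.SM, (M : Set ℕ) ∩ P.vis = (f M : Set ℕ) ∩ Q.vis

/-- Modular equivalence of modules. -/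
def SMod.modEq (P Q : SMod) : Prop := P.I = Q.I ∧ P.visEq Q

/-- The generator module `G_I = ⟨{{I} ←}, ∅, I, ∅⟩`. -/
def genMod (I : Finset ℕ) : SMod := ⟨{SRule.choice I ∅ ∅}, ∅, ↑I, ∅⟩

/-! The generator rule `{I} ←` has no body, so in the reduct of `P ⊕ G_I` with respect to `M`
it contributes exactly the facts `I ∩ M`. With the atoms of `I` fixed to their values in `M`,
a rule of `P` fires in the reduct without inputs exactly when it fires in the input-aware reduct
`P.R^{M,I}`; since no rule of `P` has a head in `I`, the least model of the joined reduct is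
`lm(P.R^{M,I}) ∪ (I ∩ M)`. So `P ⊕ G_I` has the same stable models and the same visible atoms as
`P`, and visible equivalence of the joins is visible equivalence of `P` and `Q`. -/

/-- The immediate-consequence operator `T_Q` of a positive weight program. -/
def firedHeads (Q : Set PosW) (X : Set ℕ) : Set ℕ :=
  {a | ∃ p ∈ Q, p.head = a ∧ p.w ≤ wsum p.B p.wB X}

lemma wsum_mono (B : Finset ℕ) (wB : ℕ → ℕ) {X Y : Set ℕ} (h : X ⊆ Y) :
    wsum B wB X ≤ wsum B wB Y :=
  Finset.sum_le_sum_of_subset (Finset.monotone_filter_right B fun _ _ hb => h hb)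

lemma card_le_wsum_one_iff (B : Finset ℕ) (X : Set ℕ) :
    B.card ≤ wsum B (fun _ => 1) X ↔ ↑B ⊆ X := by
  simp only [wsum, Finset.sum_const, smul_eq_mul, mul_one]
  rw [(Finset.card_filter_le B _).ge_iff_eq]
  exact Finset.card_filter_eq_iff

lemma wsum_diff_union_inter (B : Finset ℕ) (wB : ℕ → ℕ) (S M X : Set ℕ) :
    wsum B wB (X \ S ∪ S ∩ M) =
      wsum (B.filter (· ∉ S)) wB X + ∑ b ∈ B.filter (fun b => b ∈ S ∧ b ∈ M), wB b := by
  unfold wsum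
  rw [← Finset.sum_filter_add_sum_filter_not _ (· ∉ S), Finset.filter_filter,
    Finset.filter_filter, Finset.filter_filter]
  congr 2 <;> ext b <;>
    simp only [Finset.mem_filter, Set.mem_union, Set.mem_sdiff, Set.mem_inter_iff] <;> tauto

lemma firedHeads_mono (Q : Set PosW) {X Y : Set ℕ} (h : X ⊆ Y) :
    firedHeads Q X ⊆ firedHeads Q Y := by
  rintro a ⟨p, hp, rfl, hw⟩
  exact ⟨p, hp, rfl, hw.trans (wsum_mono _ _ h)⟩

lemma firedHeads_union (Q Q' : Set PosW) (X : Set ℕ) :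
    firedHeads (Q ∪ Q') X = firedHeads Q X ∪ firedHeads Q' X := by
  ext a
  simp only [firedHeads, Set.mem_union, Set.mem_ofPred_eq, or_and_right, exists_or]

lemma lmW_subset_of_firedHeads_subset {Q : Set PosW} {X : Set ℕ} (h : firedHeads Q X ⊆ X) :
    lmW Q ⊆ X :=
  Set.sInter_subset_of_mem fun p hp hw => h ⟨p, hp, rfl, hw⟩

lemma firedHeads_lmW_subset (Q : Set PosW) : firedHeads Q (lmW Q) ⊆ lmW Q := by
  rintro a ⟨p, hp, rfl, hw⟩
  refine Set.mem_sInter.2 fun X hX => hX p hp ?_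
  exact hw.trans (wsum_mono _ _ (lmW_subset_of_firedHeads_subset
    fun a ⟨q, hq, hqa, hqw⟩ => hqa ▸ hX q hq hqw))

lemma coe_subset_diff_union_inter_iff (B : Finset ℕ) (S M X : Set ℕ) :
    ↑B ⊆ X \ S ∪ S ∩ M ↔ ↑(B.filter (· ∉ S)) ⊆ X ∧ ↑B ∩ S ⊆ M := by
  simp only [Set.subset_def, Finset.coe_filter, Set.mem_ofPred_eq, Set.mem_union,
    Set.mem_sdiff, Set.mem_inter_iff, Finset.mem_coe]
  constructor
  · intro h
    exact ⟨fun b ⟨hb, hbS⟩ => ((h b hb).resolve_right fun h' => hbS h'.1).1,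
      fun b ⟨hb, hbS⟩ => ((h b hb).resolve_left fun h' => h'.2 hbS).2⟩
  · rintro ⟨hX, hM⟩ b hb
    by_cases hbS : b ∈ S
    exacts [Or.inr ⟨hbS, hM b ⟨hb, hbS⟩⟩, Or.inl ⟨hX b ⟨hb, hbS⟩, hbS⟩]

lemma sreduct_union (R R' : Set SRule) (S M : Set ℕ) :
    sreduct (R ∪ R') S M = sreduct R S M ∪ sreduct R' S M := by
  ext p
  simp only [sreduct, Set.mem_union, Set.mem_ofPred_eq]
  constructor
  · rintro (⟨A, B, C, hr | hr, h⟩ | ⟨a, w, B, C, wB, wC, hr | hr, h⟩)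
    exacts [.inl (.inl ⟨A, B, C, hr, h⟩), .inr (.inl ⟨A, B, C, hr, h⟩),
      .inl (.inr ⟨a, w, B, C, wB, wC, hr, h⟩), .inr (.inr ⟨a, w, B, C, wB, wC, hr, h⟩)]
  · rintro ((⟨A, B, C, hr, h⟩ | ⟨a, w, B, C, wB, wC, hr, h⟩) |
      (⟨A, B, C, hr, h⟩ | ⟨a, w, B, C, wB, wC, hr, h⟩))
    exacts [.inl ⟨A, B, C, .inl hr, h⟩, .inr ⟨a, w, B, C, wB, wC, .inl hr, h⟩,
      .inl ⟨A, B, C, .inr hr, h⟩, .inr ⟨a, w, B, C, wB, wC, .inr hr, h⟩]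

lemma exists_mem_heads_of_mem_sreduct {R : Set SRule} {S M : Set ℕ} {p : PosW}
    (hp : p ∈ sreduct R S M) : ∃ r ∈ R, p.head ∈ r.heads := by
  rcases hp with ⟨A, B, C, hr, a, ha, -, -, -, rfl⟩ | ⟨a, w, B, C, wB, wC, hr, rfl⟩
  exacts [⟨_, hr, ha⟩, ⟨_, hr, Finset.mem_singleton_self a⟩]

lemma disjoint_lmW_sreduct {R : Set SRule} {S : Set ℕ}
    (hR : ∀ r ∈ R, (r.heads : Set ℕ) ∩ S = ∅) (M : Set ℕ) : Disjoint (lmW (sreduct R S M)) S := by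
  refine Set.subset_compl_iff_disjoint_right.1 (lmW_subset_of_firedHeads_subset ?_)
  rintro a ⟨p, hp, rfl, -⟩ haS
  obtain ⟨r, hr, ha⟩ := exists_mem_heads_of_mem_sreduct hp
  exact (hR r hr).subset ⟨ha, haS⟩

/-- Turning the inputs `S` into ordinary atoms fixed to their values in `M` does not change
which rules fire. -/
lemma firedHeads_sreduct_empty_input (R : Set SRule) (S M X : Set ℕ) :
    firedHeads (sreduct R ∅ M) (X \ S ∪ S ∩ M) = firedHeads (sreduct R S M) X := by
  ext a
  simp only [firedHeads, sreduct, Set.mem_ofPred_eq, Set.notMem_empty, not_false_eq_true,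
    Finset.filter_true, false_and, Finset.filter_false, Finset.sum_empty, Nat.sub_zero]
  constructor
  · rintro ⟨p, ⟨A, B, C, hr, a', ha', haM, -, hC, rfl⟩ | ⟨a', w, B, C, wB, wC, hr, rfl⟩, rfl, hw⟩
    · rw [card_le_wsum_one_iff, coe_subset_diff_union_inter_iff] at hw
      exact ⟨_, .inl ⟨A, B, C, hr, a', ha', haM, hw.2, hC, rfl⟩, rfl, by
        rw [card_le_wsum_one_iff]; exact hw.1⟩
    · dsimp only at hw
      rw [wsum_diff_union_inter] at hw
      exact ⟨_, .inr ⟨a', w, B, C, wB, wC, hr, rfl⟩, rfl, by dsimp only; omega⟩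
  · rintro ⟨p, ⟨A, B, C, hr, a', ha', haM, hB, hC, rfl⟩ | ⟨a', w, B, C, wB, wC, hr, rfl⟩, rfl, hw⟩
    · rw [card_le_wsum_one_iff] at hw
      exact ⟨_, .inl ⟨A, B, C, hr, a', ha', haM, by simp, hC, rfl⟩, rfl, by
        rw [card_le_wsum_one_iff, coe_subset_diff_union_inter_iff]; exact ⟨hw, hB⟩⟩
    · exact ⟨_, .inr ⟨a', w, B, C, wB, wC, hr, rfl⟩, rfl, by
        dsimp only at hw ⊢; rw [wsum_diff_union_inter]; omega⟩

lemma firedHeads_sreduct_generator (I : Finset ℕ) (M X : Set ℕ) :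
    firedHeads (sreduct {SRule.choice I ∅ ∅} ∅ M) X = ↑I ∩ M := by
  ext a
  simp [firedHeads, sreduct]

lemma lmW_sreduct_union_generator {R : Set SRule} {I : Finset ℕ}
    (hR : ∀ r ∈ R, (r.heads : Set ℕ) ∩ ↑I = ∅) (M : Set ℕ) :
    lmW (sreduct (R ∪ {SRule.choice I ∅ ∅}) ∅ M) = lmW (sreduct R ↑I M) ∪ ↑I ∩ M := by
  set L := lmW (sreduct R ↑I M)
  set L₀ := lmW (sreduct (R ∪ {SRule.choice I ∅ ∅}) ∅ M)
  have hfired : ∀ X, firedHeads (sreduct (R ∪ {SRule.choice I ∅ ∅}) ∅ M) X =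
      firedHeads (sreduct R ∅ M) X ∪ ↑I ∩ M := by
    intro X
    rw [sreduct_union, firedHeads_union, firedHeads_sreduct_generator]
  have hIM : ↑I ∩ M ⊆ L₀ :=
    Set.subset_union_right.trans (hfired L₀ ▸ firedHeads_lmW_subset _)
  apply Set.Subset.antisymm
  · refine lmW_subset_of_firedHeads_subset ?_
    rw [hfired]
    refine Set.union_subset_union ?_ subset_rfl
    have hL : L \ ↑I = L := sdiff_eq_left.2 (disjoint_lmW_sreduct hR M)
    calc firedHeads (sreduct R ∅ M) (L ∪ ↑I ∩ M)
        = firedHeads (sreduct R ↑I M) L := by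
          rw [← firedHeads_sreduct_empty_input R ↑I M L, hL]
      _ ⊆ L := firedHeads_lmW_subset _
  · refine Set.union_subset (lmW_subset_of_firedHeads_subset ?_) hIM
    calc firedHeads (sreduct R ↑I M) L₀
        = firedHeads (sreduct R ∅ M) (L₀ \ ↑I ∪ ↑I ∩ M) :=
          (firedHeads_sreduct_empty_input R ↑I M L₀).symm
      _ ⊆ firedHeads (sreduct R ∅ M) L₀ :=
          firedHeads_mono _ (Set.union_subset Set.sdiff_subset hIM)
      _ ⊆ firedHeads (sreduct (R ∪ {SRule.choice I ∅ ∅}) ∅ M) L₀ :=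
          hfired L₀ ▸ Set.subset_union_left
      _ ⊆ L₀ := firedHeads_lmW_subset _

lemma eq_union_inter_iff_diff_eq {α : Type*} {M S Y : Set α} (hY : Disjoint Y S) :
    M = Y ∪ S ∩ M ↔ M \ S = Y := by
  constructor
  · intro h
    rw [h, Set.union_sdiff_distrib, hY.sdiff_eq_left, Set.sdiff_eq_empty.2 Set.inter_subset_left,
      Set.union_empty]
  · rintro rfl
    rw [Set.inter_comm, Set.sdiff_union_inter]

lemma comp_genMod_eq {P : SMod} {I : Finset ℕ} (hPI : P.I = ↑I) :
    P.comp (genMod I) = ⟨P.R ∪ {SRule.choice I ∅ ∅}, ∅, P.O ∪ ↑I, P.H⟩ := by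
  simp [SMod.comp, genMod, hPI]

lemma vis_comp_genMod {P : SMod} {I : Finset ℕ} (hPI : P.I = ↑I) :
    (P.comp (genMod I)).vis = P.vis := by
  rw [comp_genMod_eq hPI, SMod.vis, SMod.vis, hPI]
  exact (Set.empty_union _).trans (Set.union_comm _ _)

lemma SM_comp_genMod {P : SMod} {I : Finset ℕ} (hPI : P.I = ↑I)
    (hP : ∀ r ∈ P.R, (r.heads : Set ℕ) ∩ P.I = ∅) : (P.comp (genMod I)).SM = P.SM := by
  have hhb : (P.comp (genMod I)).hb = P.hb := by
    rw [comp_genMod_eq hPI, SMod.hb, SMod.hb, hPI]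
    exact congrArg (· ∪ P.H) ((Set.empty_union _).trans (Set.union_comm _ _))
  rw [hPI] at hP
  ext M
  simp only [SMod.SM, Set.mem_ofPred_eq, hhb]
  rw [comp_genMod_eq hPI, Set.sdiff_empty, lmW_sreduct_union_generator hP, hPI,
    eq_union_inter_iff_diff_eq (disjoint_lmW_sreduct hP M)]

lemma SMod.visEq_congr {P P' Q Q' : SMod} (hP : P.SM = P'.SM) (hPv : P.vis = P'.vis)
    (hQ : Q.SM = Q'.SM) (hQv : Q.vis = Q'.vis) : P.visEq Q ↔ P'.visEq Q' := by
  unfold SMod.visEq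
  rw [hP, hPv, hQ, hQv]

theorem modEq_iff_visEq_with_generator_general (P Q : SMod) (I : Finset ℕ)
    (hP : P.wf) (hQ : Q.wf)
    (hPI : P.I = ↑I) (hQI : Q.I = ↑I) :
    P.modEq Q ↔ (P.comp (genMod I)).visEq (Q.comp (genMod I)) := by
  rw [SMod.visEq_congr (SM_comp_genMod hPI hP.2.2.2.2) (vis_comp_genMod hPI)
    (SM_comp_genMod hQI hQ.2.2.2.2) (vis_comp_genMod hQI)]
  exact and_iff_right (hPI.trans hQI.symm)

/-- reduction of modular equivalence to visible equivalence via
the input generator module `G_I`. -/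
theorem modEq_iff_visEq_with_generator (P Q : SMod) (I : Finset ℕ)
    (hP : P.wf) (hQ : Q.wf)
    (hPI : P.I = ↑I) (hQI : Q.I = ↑I) (hO : P.O = Q.O) :
    P.modEq Q ↔ (P.comp (genMod I)).visEq (Q.comp (genMod I)) :=
  modEq_iff_visEq_with_generator_general P Q I hP hQ hPI hQI
end

section
/- Semantical modular equivalence coincides with modular equivalence: for any modules P and Q, P ≡ₘ Q if and only if P ≡_sem Q. -/
attribute [local instance] Classical.propDecidable

/-- The semantical join `P ⊔̲ R` is defined. -/
def semJoinDefined (P R : SMod) : Prop :=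
  compDefined P R ∧ (P.comp R).SM = natJoin P R P.SM R.SM

/-- Semantical modular equivalence. -/
def SMod.semEq (P Q : SMod) : Prop :=
  P.I = Q.I ∧ ∀ R : SMod, R.wf → semJoinDefined P R → semJoinDefined Q R →
    (P.comp R).visEq (Q.comp R)

/-! ### Auxiliary lemmas -/

lemma sm_sub {P : SMod} {M : Set ℕ} (h : M ∈ P.SM) : M ⊆ P.hb := h.1

lemma vis_sub_hb (P : SMod) : P.vis ⊆ P.hb := fun _ hx => Or.inl hx

lemma inter_vis_eq {M : Set ℕ} {P R : SMod} (hM : M ⊆ P.hb)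
    (hdisj : P.H ∩ R.hb = ∅) : M ∩ R.vis = (M ∩ P.vis) ∩ R.vis := by
  ext x
  constructor
  · rintro ⟨hxM, hxR⟩
    refine ⟨⟨hxM, ?_⟩, hxR⟩
    have hhb : x ∈ P.I ∪ P.O ∪ P.H := hM hxM
    rcases hhb with h | h
    · exact h
    · exact (Set.eq_empty_iff_forall_notMem.mp hdisj x ⟨h, vis_sub_hb R hxR⟩).elim
  · rintro ⟨⟨h1, _⟩, h2⟩; exact ⟨h1, h2⟩

lemma decomp_left {P R : SMod} {M₁ M₂ : Set ℕ}
    (h₁ : M₁ ⊆ P.hb) (h₂ : M₂ ⊆ R.hb)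
    (hPH : P.H ∩ R.hb = ∅)
    (hcomp : compatible P R M₁ M₂) : (M₁ ∪ M₂) ∩ P.hb = M₁ := by
  ext x
  constructor
  · rintro ⟨h | h, hxP⟩
    · exact h
    · have hxR : x ∈ R.hb := h₂ h
      have hxPv : x ∈ P.vis := by
        have hhb : x ∈ P.I ∪ P.O ∪ P.H := hxP
        rcases hhb with h' | h'
        · exact h'
        · exact (Set.eq_empty_iff_forall_notMem.mp hPH x ⟨h', hxR⟩).elim
      have hx2 : x ∈ M₂ ∩ P.vis := ⟨h, hxPv⟩
      have hx1 : x ∈ M₁ ∩ R.vis := by rw [hcomp]; exact hx2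
      exact hx1.1
  · intro h; exact ⟨Or.inl h, h₁ h⟩

lemma decomp_right {P R : SMod} {M₁ M₂ : Set ℕ}
    (h₁ : M₁ ⊆ P.hb) (h₂ : M₂ ⊆ R.hb)
    (hRH : R.H ∩ P.hb = ∅)
    (hcomp : compatible P R M₁ M₂) : (M₁ ∪ M₂) ∩ R.hb = M₂ := by
  rw [Set.union_comm]
  exact decomp_left h₂ h₁ hRH hcomp.symm

lemma extract_mem {P R : SMod} (hPR : semJoinDefined P R) {M : Set ℕ}
    (hM : M ∈ (P.comp R).SM) :
    M ∩ P.hb ∈ P.SM ∧ M ∩ R.hb ∈ R.SM ∧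
    compatible P R (M ∩ P.hb) (M ∩ R.hb) ∧ M = (M ∩ P.hb) ∪ (M ∩ R.hb) := by
  rw [hPR.2] at hM
  obtain ⟨M₁, h₁, M₂, h₂, hc, rfl⟩ := hM
  have e1 : (M₁ ∪ M₂) ∩ P.hb = M₁ := decomp_left (sm_sub h₁) (sm_sub h₂) hPR.1.2.1 hc
  have e2 : (M₁ ∪ M₂) ∩ R.hb = M₂ := decomp_right (sm_sub h₁) (sm_sub h₂) hPR.1.2.2 hc
  rw [e1, e2]
  exact ⟨h₁, h₂, hc, rfl⟩

lemma comp_vis_sub (P R : SMod) : (P.comp R).vis ⊆ P.vis ∪ R.vis := by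
  intro x hx
  simp only [SMod.comp, SMod.vis, Set.mem_union, Set.mem_diff] at hx ⊢
  tauto

/-- The main transfer lemma for the forward direction. -/
lemma visEq_comp {P Q R : SMod} (hI : P.I = Q.I) (hO : P.O = Q.O)
    (hPR : semJoinDefined P R) (hQR : semJoinDefined Q R)
    (hv : P.visEq Q) : (P.comp R).visEq (Q.comp R) := by
  obtain ⟨hvis, f, hfb, hfp⟩ := hv
  have hPH : P.H ∩ R.hb = ∅ := hPR.1.2.1
  have hRHP : R.H ∩ P.hb = ∅ := hPR.1.2.2
  have hQH : Q.H ∩ R.hb = ∅ := hQR.1.2.1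
  have hRHQ : R.H ∩ Q.hb = ∅ := hQR.1.2.2
  have hviseq : (P.comp R).vis = (Q.comp R).vis := by
    simp [SMod.comp, SMod.vis, hI, hO]
  have hcompQ : ∀ (M₁ : P.SM) (M₂ : Set ℕ), compatible P R M₁ M₂ →
      compatible Q R (f M₁) M₂ := by
    intro M₁ M₂ hc
    show (f M₁ : Set ℕ) ∩ R.vis = M₂ ∩ Q.vis
    rw [inter_vis_eq (sm_sub (f M₁).2) hQH, ← hfp M₁,
      ← inter_vis_eq (sm_sub M₁.2) hPH, hc, hvis]
  have hcompP : ∀ (M₁ : P.SM) (M₂ : Set ℕ), compatible Q R (f M₁) M₂ →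
      compatible P R M₁ M₂ := by
    intro M₁ M₂ hc
    show (M₁ : Set ℕ) ∩ R.vis = M₂ ∩ P.vis
    rw [inter_vis_eq (sm_sub M₁.2) hPH, hfp M₁,
      ← inter_vis_eq (sm_sub (f M₁).2) hQH, hc, hvis]
  have hmem : ∀ M : (P.comp R).SM,
      (f ⟨(M : Set ℕ) ∩ P.hb, (extract_mem hPR M.2).1⟩ : Set ℕ) ∪
        ((M : Set ℕ) ∩ R.hb) ∈ (Q.comp R).SM := by
    intro M
    obtain ⟨hm1, hm2, hm3, hm4⟩ := extract_mem hPR M.2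
    rw [hQR.2]
    exact ⟨_, (f ⟨(M : Set ℕ) ∩ P.hb, hm1⟩).2, _, hm2,
      hcompQ ⟨(M : Set ℕ) ∩ P.hb, hm1⟩ _ hm3, rfl⟩
  refine ⟨hviseq, fun M =>
    ⟨(f ⟨(M : Set ℕ) ∩ P.hb, (extract_mem hPR M.2).1⟩ : Set ℕ) ∪
      ((M : Set ℕ) ∩ R.hb), hmem M⟩, ⟨?_, ?_⟩, ?_⟩
  · -- injective
    intro M M' h
    have h' : (f ⟨(M : Set ℕ) ∩ P.hb, (extract_mem hPR M.2).1⟩ : Set ℕ) ∪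
        ((M : Set ℕ) ∩ R.hb) =
        (f ⟨(M' : Set ℕ) ∩ P.hb, (extract_mem hPR M'.2).1⟩ : Set ℕ) ∪
        ((M' : Set ℕ) ∩ R.hb) := congrArg Subtype.val h
    obtain ⟨hm1, hm2, hm3, hm4⟩ := extract_mem hPR M.2
    obtain ⟨hm1', hm2', hm3', hm4'⟩ := extract_mem hPR M'.2
    set A : P.SM := ⟨(M : Set ℕ) ∩ P.hb, hm1⟩ with hA
    set A' : P.SM := ⟨(M' : Set ℕ) ∩ P.hb, hm1'⟩ with hA'
    have e1 : ((f A : Set ℕ) ∪ ((M : Set ℕ) ∩ R.hb)) ∩ Q.hb = f A :=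
      decomp_left (sm_sub (f A).2) hm2.1 hQH (hcompQ A _ hm3)
    have e2 : ((f A : Set ℕ) ∪ ((M : Set ℕ) ∩ R.hb)) ∩ R.hb = (M : Set ℕ) ∩ R.hb :=
      decomp_right (sm_sub (f A).2) hm2.1 hRHQ (hcompQ A _ hm3)
    have e1' : ((f A' : Set ℕ) ∪ ((M' : Set ℕ) ∩ R.hb)) ∩ Q.hb = f A' :=
      decomp_left (sm_sub (f A').2) hm2'.1 hQH (hcompQ A' _ hm3')
    have e2' : ((f A' : Set ℕ) ∪ ((M' : Set ℕ) ∩ R.hb)) ∩ R.hb = (M' : Set ℕ) ∩ R.hb :=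
      decomp_right (sm_sub (f A').2) hm2'.1 hRHQ (hcompQ A' _ hm3')
    rw [h'] at e1 e2
    have hfA : f A = f A' := Subtype.ext (e1.symm.trans e1')
    have hAA : A = A' := hfb.1 hfA
    have hPhb : (M : Set ℕ) ∩ P.hb = (M' : Set ℕ) ∩ P.hb := congrArg Subtype.val hAA
    have hRhb : (M : Set ℕ) ∩ R.hb = (M' : Set ℕ) ∩ R.hb := e2.symm.trans e2'
    apply Subtype.ext
    rw [hm4, hm4', hPhb, hRhb]
  · -- surjective
    intro N
    obtain ⟨hn1, hn2, hn3, hn4⟩ := extract_mem hQR N.2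
    obtain ⟨M₁, hM₁⟩ := hfb.2 ⟨(N : Set ℕ) ∩ Q.hb, hn1⟩
    have hcP : compatible P R M₁ ((N : Set ℕ) ∩ R.hb) := by
      apply hcompP
      rw [hM₁]
      exact hn3
    have hMmem : (M₁ : Set ℕ) ∪ ((N : Set ℕ) ∩ R.hb) ∈ (P.comp R).SM := by
      rw [hPR.2]
      exact ⟨_, M₁.2, _, hn2, hcP, rfl⟩
    refine ⟨⟨_, hMmem⟩, ?_⟩
    apply Subtype.ext
    have d1 : ((M₁ : Set ℕ) ∪ ((N : Set ℕ) ∩ R.hb)) ∩ P.hb = M₁ :=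
      decomp_left (sm_sub M₁.2) hn2.1 hPH hcP
    have d2 : ((M₁ : Set ℕ) ∪ ((N : Set ℕ) ∩ R.hb)) ∩ R.hb = (N : Set ℕ) ∩ R.hb :=
      decomp_right (sm_sub M₁.2) hn2.1 hRHP hcP
    have hfeq : f ⟨((M₁ : Set ℕ) ∪ ((N : Set ℕ) ∩ R.hb)) ∩ P.hb,
        (extract_mem hPR hMmem).1⟩ = f M₁ := congrArg f (Subtype.ext d1)
    show (f ⟨((M₁ : Set ℕ) ∪ ((N : Set ℕ) ∩ R.hb)) ∩ P.hb,
        (extract_mem hPR hMmem).1⟩ : Set ℕ) ∪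
      (((M₁ : Set ℕ) ∪ ((N : Set ℕ) ∩ R.hb)) ∩ R.hb) = (N : Set ℕ)
    rw [hfeq, hM₁, d2]
    exact hn4.symm
  · -- visible projections
    intro M
    obtain ⟨hm1, hm2, hm3, hm4⟩ := extract_mem hPR M.2
    set A : P.SM := ⟨(M : Set ℕ) ∩ P.hb, hm1⟩ with hA
    show (M : Set ℕ) ∩ (P.comp R).vis =
      ((f A : Set ℕ) ∪ ((M : Set ℕ) ∩ R.hb)) ∩ (Q.comp R).vis
    have hRproj : (A : Set ℕ) ∩ R.vis = (f A : Set ℕ) ∩ R.vis := by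
      rw [inter_vis_eq (sm_sub A.2) hPH, hfp A, ← inter_vis_eq (sm_sub (f A).2) hQH]
    have hVP := comp_vis_sub P R
    have hVQ : (P.comp R).vis ⊆ Q.vis ∪ R.vis := by
      rw [hviseq]; exact comp_vis_sub Q R
    have hMV : (A : Set ℕ) ∩ (P.comp R).vis = (f A : Set ℕ) ∩ (P.comp R).vis := by
      ext x
      constructor
      · rintro ⟨hx1, hx2⟩
        refine ⟨?_, hx2⟩
        rcases hVP hx2 with h | h
        · exact ((Set.ext_iff.mp (hfp A) x).mp ⟨hx1, h⟩).1
        · exact ((Set.ext_iff.mp hRproj x).mp ⟨hx1, h⟩).1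
      · rintro ⟨hx1, hx2⟩
        refine ⟨?_, hx2⟩
        rcases hVQ hx2 with h | h
        · exact ((Set.ext_iff.mp (hfp A) x).mpr ⟨hx1, h⟩).1
        · exact ((Set.ext_iff.mp hRproj x).mpr ⟨hx1, h⟩).1
    rw [← hviseq]
    conv_lhs => rw [hm4]
    rw [Set.union_inter_distrib_right, Set.union_inter_distrib_right]
    rw [show ((M : Set ℕ) ∩ P.hb) ∩ (P.comp R).vis = (A : Set ℕ) ∩ (P.comp R).vis from rfl,
      hMV]

/-! ### The empty module, for the backward direction -/

def emptyMod : SMod := ⟨∅, ∅, ∅, ∅⟩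

lemma emptyMod_wf : emptyMod.wf := by
  refine ⟨?_, ?_, ?_, ?_, ?_⟩ <;> simp [emptyMod, SMod.hb]

lemma comp_empty (P : SMod) : P.comp emptyMod = P := by
  cases P
  simp [SMod.comp, emptyMod]

lemma sreduct_empty (I M : Set ℕ) : sreduct ∅ I M = ∅ := by
  apply Set.eq_empty_iff_forall_notMem.mpr
  rintro p (⟨A, B, C, h, -⟩ | ⟨a, w, B, C, wB, wC, h, -⟩) <;>
    exact Set.notMem_empty _ h

lemma lmW_empty : lmW ∅ = ∅ := by
  apply Set.eq_empty_iff_forall_notMem.mpr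
  intro x hx
  exact Set.mem_sInter.mp hx ∅ (by intro p hp; exact absurd hp (Set.notMem_empty p))

lemma SM_empty : emptyMod.SM = {(∅ : Set ℕ)} := by
  ext M
  simp only [SMod.SM, emptyMod, Set.mem_setOf_eq, Set.mem_singleton_iff]
  constructor
  · rintro ⟨h1, -⟩
    have : M ⊆ (∅ : Set ℕ) := by
      intro x hx
      have := h1 hx
      simp [SMod.hb] at this
    exact Set.subset_empty_iff.mp this
  · rintro rfl
    refine ⟨by simp [SMod.hb], ?_⟩
    show (∅ : Set ℕ) \ ∅ = lmW (sreduct ∅ ∅ ∅)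
    rw [sreduct_empty, lmW_empty]
    simp

lemma semJoin_empty (P : SMod) (_hP : P.wf) : semJoinDefined P emptyMod := by
  constructor
  · refine ⟨?_, ?_, ?_⟩
    · simp [emptyMod]
    · have : emptyMod.hb = ∅ := by simp [emptyMod, SMod.hb]
      rw [this]; simp
    · show (∅ : Set ℕ) ∩ P.hb = ∅
      simp
  · rw [comp_empty, SM_empty]
    ext M
    simp only [natJoin, Set.mem_setOf_eq, Set.mem_singleton_iff]
    constructor
    · intro h
      refine ⟨M, h, ∅, rfl, ?_, by simp⟩
      show M ∩ emptyMod.vis = (∅ : Set ℕ) ∩ P.vis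
      simp [emptyMod, SMod.vis]
    · rintro ⟨M₁, h₁, M₂, rfl, hc, rfl⟩
      simpa using h₁

/-- semantical modular equivalence coincides with modular
equivalence. -/
theorem modEq_iff_semEq (P Q : SMod) (hP : P.wf) (hQ : Q.wf) :
    P.modEq Q ↔ P.semEq Q := by
  constructor
  · rintro ⟨hI, hv⟩
    have hvis : P.vis = Q.vis := hv.1
    have hO : P.O = Q.O := by
      ext x
      constructor
      · intro hx
        have hxv : x ∈ Q.I ∪ Q.O := by
          have h0 : x ∈ P.vis := Or.inr hx
          rw [hvis] at h0; exact h0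
        rcases hxv with h | h
        · exact (Set.eq_empty_iff_forall_notMem.mp hP.1 x
            ⟨by rw [hI]; exact h, hx⟩).elim
        · exact h
      · intro hx
        have hxv : x ∈ P.I ∪ P.O := by
          have h0 : x ∈ Q.vis := Or.inr hx
          rw [← hvis] at h0; exact h0
        rcases hxv with h | h
        · exact (Set.eq_empty_iff_forall_notMem.mp hQ.1 x
            ⟨by rw [← hI]; exact h, hx⟩).elim
        · exact h
    exact ⟨hI, fun R _ hPR hQR => visEq_comp hI hO hPR hQR hv⟩
  · rintro ⟨hI, hsem⟩
    have h := hsem emptyMod emptyMod_wf (semJoin_empty P hP) (semJoin_empty Q hQ)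
    rw [comp_empty, comp_empty] at h
    exact ⟨hI, h⟩
end
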